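/- Let τ = (1 + √5)/2. For every k ∈ ℤ and every n ≥ 1, the quantity ⌈(k+n)/τ⌉ − ⌈k/τ⌉ equals either ⌈n/τ⌉ or ⌊n/τ⌋. Consequently, in any n-letter word of the Fibonacci chain (λ_k) with λ_k = (⌈k/τ⌉ + kτ)/τ², the number of gaps equal to 1 is ⌈n/τ⌉ or ⌊n/τ⌋, and correspondingly the number of gaps equal to 1/τ is ⌊n/τ²⌋ or ⌈n/τ²⌉. -/

import Mathlib

open MeasureTheory Set Filter

noncomputable section

/-- The golden mean `τ = (1 + √5)/2`. -/
def tau : ℝ := (1 + Real.sqrt 5) / 2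

/-- The cut-and-project model set `Σ^Ω = { a + bτ : a, b ∈ ℤ, a - b/τ ∈ Ω }`. -/
def SigmaSet (Ω : Set ℝ) : Set ℝ :=
  {x | ∃ a b : ℤ, x = (a : ℝ) + (b : ℝ) * tau ∧ (a : ℝ) - (b : ℝ) / tau ∈ Ω}

/-- The increasing enumeration `λ_k = (⌈k/τ⌉ + kτ)/τ²` of the rescaled Fibonacci
chain `Σ^{[0,τ²)}`. -/
def fibChain (k : ℤ) : ℝ := ((⌈(k : ℝ) / tau⌉ : ℝ) + (k : ℝ) * tau) / tau ^ 2

/-!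
From `⌈x⌉ + ⌊y⌋ ≤ ⌈x + y⌉ ≤ ⌈x⌉ + ⌈y⌉` and `⌈y⌉ ≤ ⌊y⌋ + 1`, the increment `⌈x + y⌉ - ⌈x⌉` is
always `⌈y⌉` or `⌊y⌋`. With `c m = ⌈m/τ⌉`, the gap `λ_{m+1} - λ_m = (c (m+1) - c m + τ)/τ²` is
`1` or `1/τ` according as the increment `c (m+1) - c m ∈ {⌈1/τ⌉, ⌊1/τ⌋} = {1, 0}` is `1` or `0`.
So the letters `L` of a word of length `n` are counted by the telescoping sum `c (k+n) - c k`,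
and the letters `S` by its complement, using `n/τ² = n - n/τ`.
-/

theorem Int.ceil_add_sub_ceil_eq_ceil_or_floor {R : Type*} [Ring R] [LinearOrder R]
    [FloorRing R] [IsOrderedRing R] (x y : R) :
    ⌈x + y⌉ - ⌈x⌉ = ⌈y⌉ ∨ ⌈x + y⌉ - ⌈x⌉ = ⌊y⌋ := by
  have upper := Int.ceil_add_le x y
  have lower : ⌈x⌉ + ⌊y⌋ ≤ ⌈x + y⌉ := by
    rw [← Int.ceil_add_intCast]
    exact Int.ceil_mono (add_le_add_right (Int.floor_le y) x)
  have := Int.ceil_le_floor_add_one y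
  omega

theorem card_filter_range_sub_eq_one {f : ℕ → ℤ} {n : ℕ}
    (hf : ∀ i < n, f (i + 1) - f i = 0 ∨ f (i + 1) - f i = 1) :
    (({i ∈ Finset.range n | f (i + 1) - f i = 1} : Finset ℕ).card : ℤ) = f n - f 0 := by
  rw [Finset.natCast_card_filter, ← Finset.sum_range_sub]
  refine Finset.sum_congr rfl fun i hi => ?_
  rcases hf i (Finset.mem_range.mp hi) with h | h <;> simp [h]

theorem tau_pos : 0 < tau := Real.goldenRatio_pos

theorem one_lt_tau : 1 < tau := Real.one_lt_goldenRatio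

theorem tau_sq : tau ^ 2 = tau + 1 := Real.goldenRatio_sq

theorem div_tau_sq (x : ℝ) : x / tau ^ 2 = x - x / tau := by
  have := tau_pos.ne'
  field_simp
  linear_combination (-x) * tau_sq

theorem floor_intCast_div_tau_sq (m : ℤ) : ⌊(m : ℝ) / tau ^ 2⌋ = m - ⌈(m : ℝ) / tau⌉ := by
  rw [div_tau_sq, sub_eq_add_neg, add_comm, Int.floor_add_intCast, Int.floor_neg]
  ring

theorem ceil_intCast_div_tau_sq (m : ℤ) : ⌈(m : ℝ) / tau ^ 2⌉ = m - ⌊(m : ℝ) / tau⌋ := by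
  rw [div_tau_sq, sub_eq_add_neg, add_comm, Int.ceil_add_intCast, Int.ceil_neg]
  ring

theorem ceil_succ_div_tau_sub_ceil_div_tau (m : ℤ) :
    ⌈((m : ℝ) + 1) / tau⌉ - ⌈(m : ℝ) / tau⌉ = 0 ∨
      ⌈((m : ℝ) + 1) / tau⌉ - ⌈(m : ℝ) / tau⌉ = 1 := by
  have hpos : 0 < 1 / tau := one_div_pos.mpr tau_pos
  have hlt : 1 / tau < 1 := (div_lt_one tau_pos).mpr one_lt_tau
  have hceil : ⌈1 / tau⌉ = 1 := Int.ceil_eq_iff.mpr ⟨by simpa using hpos, by simpa using hlt.le⟩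
  have hfloor : ⌊1 / tau⌋ = 0 := Int.floor_eq_zero_iff.mpr ⟨hpos.le, hlt⟩
  rw [add_div]
  rcases Int.ceil_add_sub_ceil_eq_ceil_or_floor ((m : ℝ) / tau) (1 / tau) with h | h
  · exact Or.inr (h.trans hceil)
  · exact Or.inl (h.trans hfloor)

theorem fibChain_succ_sub (m : ℤ) :
    fibChain (m + 1) - fibChain m =
      ((⌈((m : ℝ) + 1) / tau⌉ - ⌈(m : ℝ) / tau⌉ : ℤ) + tau) / tau ^ 2 := by
  unfold fibChain
  push_cast
  ring

theorem fibChain_succ_sub_eq_one_iff (m : ℤ) :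
    fibChain (m + 1) - fibChain m = 1 ↔ ⌈((m : ℝ) + 1) / tau⌉ - ⌈(m : ℝ) / tau⌉ = 1 := by
  rw [fibChain_succ_sub, div_eq_one_iff_eq (pow_pos tau_pos 2).ne', tau_sq, add_comm tau 1,
    add_left_inj]
  exact_mod_cast Iff.rfl

theorem ncard_fibChain_gap_eq_one (k : ℤ) (n : ℕ) :
    (({i : ℕ | i < n ∧
        fibChain (k + (i : ℤ) + 1) - fibChain (k + (i : ℤ)) = 1}).ncard : ℤ) =
      ⌈((k : ℝ) + (n : ℝ)) / tau⌉ - ⌈(k : ℝ) / tau⌉ := by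
  set f : ℕ → ℤ := fun i => ⌈((k : ℝ) + (i : ℝ)) / tau⌉
  have hgap (i : ℕ) :
      f (i + 1) - f i = ⌈(((k + i : ℤ) : ℝ) + 1) / tau⌉ - ⌈((k + i : ℤ) : ℝ) / tau⌉ := by
    simp only [f, Nat.cast_succ, Int.cast_add, Int.cast_natCast, add_assoc]
  have hset : {i : ℕ | i < n ∧ fibChain (k + (i : ℤ) + 1) - fibChain (k + (i : ℤ)) = 1} =
      ↑({i ∈ Finset.range n | f (i + 1) - f i = 1}) := by
    ext i
    simp [fibChain_succ_sub_eq_one_iff, hgap]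
  rw [hset, Set.ncard_coe_finset,
    card_filter_range_sub_eq_one fun i _ => hgap i ▸ ceil_succ_div_tau_sub_ceil_div_tau _]
  simp [f]

theorem statement12_general (k : ℤ) (n : ℕ) :
    (⌈((k : ℝ) + (n : ℝ)) / tau⌉ - ⌈(k : ℝ) / tau⌉ = ⌈(n : ℝ) / tau⌉ ∨
      ⌈((k : ℝ) + (n : ℝ)) / tau⌉ - ⌈(k : ℝ) / tau⌉ = ⌊(n : ℝ) / tau⌋) ∧
    ((({i : ℕ | i < n ∧
          fibChain (k + (i : ℤ) + 1) - fibChain (k + (i : ℤ)) = 1}).ncard : ℤ) =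
            ⌈(n : ℝ) / tau⌉ ∧
        (n : ℤ) - (({i : ℕ | i < n ∧
          fibChain (k + (i : ℤ) + 1) - fibChain (k + (i : ℤ)) = 1}).ncard : ℤ) =
            ⌊(n : ℝ) / tau ^ 2⌋) ∨
      ((({i : ℕ | i < n ∧
          fibChain (k + (i : ℤ) + 1) - fibChain (k + (i : ℤ)) = 1}).ncard : ℤ) =
            ⌊(n : ℝ) / tau⌋ ∧
        (n : ℤ) - (({i : ℕ | i < n ∧
          fibChain (k + (i : ℤ) + 1) - fibChain (k + (i : ℤ)) = 1}).ncard : ℤ) =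
            ⌈(n : ℝ) / tau ^ 2⌉) := by
  have hsplit := Int.ceil_add_sub_ceil_eq_ceil_or_floor ((k : ℝ) / tau) ((n : ℝ) / tau)
  rw [← add_div] at hsplit
  have hfloor := floor_intCast_div_tau_sq n
  have hceil := ceil_intCast_div_tau_sq n
  rw [Int.cast_natCast] at hfloor hceil
  rw [ncard_fibChain_gap_eq_one]
  rcases hsplit with h | h
  · exact Or.inl ⟨Or.inl h, h, by rw [h, hfloor]⟩
  · exact Or.inr ⟨h, by rw [h, hceil]⟩

/-- `⌈(k+n)/τ⌉ - ⌈k/τ⌉` equals `⌈n/τ⌉` or `⌊n/τ⌋`; consequently any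
`n`-letter word of the Fibonacci chain has `⌈n/τ⌉` letters `L` and `⌊n/τ²⌋` letters
`S`, or `⌊n/τ⌋` letters `L` and `⌈n/τ²⌉` letters `S`. -/
theorem statement12 (k : ℤ) (n : ℕ) (hn : 1 ≤ n) :
    (⌈((k : ℝ) + (n : ℝ)) / tau⌉ - ⌈(k : ℝ) / tau⌉ = ⌈(n : ℝ) / tau⌉ ∨
      ⌈((k : ℝ) + (n : ℝ)) / tau⌉ - ⌈(k : ℝ) / tau⌉ = ⌊(n : ℝ) / tau⌋) ∧
    ((({i : ℕ | i < n ∧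
          fibChain (k + (i : ℤ) + 1) - fibChain (k + (i : ℤ)) = 1}).ncard : ℤ) =
            ⌈(n : ℝ) / tau⌉ ∧
        (n : ℤ) - (({i : ℕ | i < n ∧
          fibChain (k + (i : ℤ) + 1) - fibChain (k + (i : ℤ)) = 1}).ncard : ℤ) =
            ⌊(n : ℝ) / tau ^ 2⌋) ∨
      ((({i : ℕ | i < n ∧
          fibChain (k + (i : ℤ) + 1) - fibChain (k + (i : ℤ)) = 1}).ncard : ℤ) =
            ⌊(n : ℝ) / tau⌋ ∧
        (n : ℤ) - (({i : ℕ | i < n ∧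
          fibChain (k + (i : ℤ) + 1) - fibChain (k + (i : ℤ)) = 1}).ncard : ℤ) =
            ⌈(n : ℝ) / tau ^ 2⌉) :=
  statement12_general k n
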